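/- Let 𝔨 be the Lie algebra of a compact Lie group (i.e., a real Lie algebra admitting an invariant inner product) and τ an involutive Lie algebra automorphism of 𝔨. Then there exists a maximal abelian subalgebra 𝔱 ⊆ 𝔨 that is τ-stable, i.e., τ(𝔱) = 𝔱. -/

import Mathlib

/-!
Let `𝔞` be maximal among commuting subspaces of the fixed space `𝔨^τ`, let `𝔟` be maximal among
commuting subspaces of `𝔨₋ ∩ c(𝔞)`, and put `𝔱 = 𝔞 + 𝔟`. Then `𝔱` is commuting and `τ`-stable, so
its centralizer `c(𝔱)` is `τ`-stable as well and, `2` being invertible, is the sum of its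
`(±1)`-eigenspaces. By the two maximality properties the `+1` part lies in `𝔨^τ ∩ c(𝔞) ⊆ 𝔞` and
the `−1` part in `𝔨₋ ∩ c(𝔞) ∩ c(𝔟) ⊆ 𝔟`. Hence `c(𝔱) = 𝔱`, i.e. `𝔱` is maximal abelian.
-/

open Module End

theorem Module.End.mem_invtSubmodule_of_le_eigenspace {R M : Type*} [CommRing R]
    [AddCommGroup M] [Module R M] {f : End R M} {μ : R} {N : Submodule R M}
    (hN : N ≤ f.eigenspace μ) : N ∈ f.invtSubmodule := fun x hx => by
  rw [Submodule.mem_comap, mem_eigenspace_iff.mp (hN hx)]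
  exact N.smul_mem μ hx

theorem Submodule.le_inf_eigenspace_one_sup_inf_eigenspace_neg_one {R M : Type*} [CommRing R]
    [Invertible (2 : R)] [AddCommGroup M] [Module R M] {f : End R M}
    (hf : ∀ x, f (f x) = x) {N : Submodule R M} (hN : N ∈ f.invtSubmodule) :
    N ≤ N ⊓ f.eigenspace 1 ⊔ N ⊓ f.eigenspace (-1) := fun x hx => by
  refine mem_sup.mpr ⟨⅟2 • (x + f x), mem_inf.mpr ⟨N.smul_mem _ (N.add_mem hx (hN hx)), ?_⟩,
    ⅟2 • (x - f x), mem_inf.mpr ⟨N.smul_mem _ (N.sub_mem hx (hN hx)), ?_⟩, ?_⟩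
  · rw [mem_eigenspace_iff, map_smul, map_add, hf, add_comm, one_smul]
  · rw [mem_eigenspace_iff, map_smul, map_sub, hf, neg_smul, one_smul, ← smul_neg, neg_sub]
  · rw [← smul_add, add_add_sub_cancel, ← two_smul R x, smul_smul, invOf_mul_self, one_smul]

namespace Submodule

variable {R L : Type*} [CommRing R] [LieRing L] [LieAlgebra R L]

def lieCentralizer (A : Submodule R L) : Submodule R L where
  carrier := {x | ∀ a ∈ A, ⁅x, a⁆ = 0}
  add_mem' hx hy a ha := by rw [add_lie, hx a ha, hy a ha, add_zero]
  zero_mem' a _ := zero_lie a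
  smul_mem' r x hx a ha := by rw [smul_lie, hx a ha, smul_zero]

@[simp]
theorem mem_lieCentralizer {A : Submodule R L} {x : L} :
    x ∈ A.lieCentralizer ↔ ∀ a ∈ A, ⁅x, a⁆ = 0 :=
  Iff.rfl

theorem le_lieCentralizer_comm {A B : Submodule R L} :
    A ≤ B.lieCentralizer ↔ B ≤ A.lieCentralizer := by
  suffices ∀ {A B : Submodule R L}, A ≤ B.lieCentralizer → B ≤ A.lieCentralizer from
    ⟨this, this⟩
  intro A B h b hb a ha
  rw [← lie_skew, h ha b hb, neg_zero]

theorem lieCentralizer_sup (A B : Submodule R L) :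
    (A ⊔ B).lieCentralizer = A.lieCentralizer ⊓ B.lieCentralizer := by
  refine le_antisymm (fun x hx => ⟨fun a ha => hx a (mem_sup_left ha),
    fun b hb => hx b (mem_sup_right hb)⟩) fun x hx t ht => ?_
  obtain ⟨a, ha, b, hb, rfl⟩ := mem_sup.mp ht
  rw [lie_add, hx.1 a ha, hx.2 b hb, add_zero]

theorem lieCentralizer_mem_invtSubmodule {τ : L →ₗ⁅R⁆ L} (hτ : ∀ x, τ (τ x) = x)
    {A : Submodule R L} (hA : A ∈ invtSubmodule (τ : End R L)) :
    A.lieCentralizer ∈ invtSubmodule (τ : End R L) := fun x hx a ha => by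
  change ⁅τ x, a⁆ = 0
  rw [← hτ a, ← τ.map_lie, hx (τ a) (hA ha), map_zero]

def IsCommuting (A : Submodule R L) : Prop :=
  A ≤ A.lieCentralizer

theorem IsCommuting.sup {A B : Submodule R L} (hA : A.IsCommuting) (hB : B.IsCommuting)
    (hAB : A ≤ B.lieCentralizer) : (A ⊔ B).IsCommuting := by
  rw [IsCommuting, lieCentralizer_sup]
  exact sup_le (le_inf hA hAB) (le_inf (le_lieCentralizer_comm.mp hAB) hB)

theorem isCommuting_span_singleton (x : L) : (span R {x}).IsCommuting := by
  rw [IsCommuting, span_singleton_le_iff_mem, mem_lieCentralizer]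
  intro a ha
  obtain ⟨r, rfl⟩ := mem_span_singleton.mp ha
  rw [lie_smul, lie_self, smul_zero]

theorem isCommuting_sSup_of_directedOn {s : Set (Submodule R L)}
    (hs : ∀ A ∈ s, A.IsCommuting) (hdir : DirectedOn (· ≤ ·) s) : (sSup s).IsCommuting := by
  rcases s.eq_empty_or_nonempty with rfl | hne
  · simp [IsCommuting]
  intro x hx y hy
  obtain ⟨A₁, hA₁, hx⟩ := (mem_sSup_of_directed hne hdir).mp hx
  obtain ⟨A₂, hA₂, hy⟩ := (mem_sSup_of_directed hne hdir).mp hy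
  obtain ⟨A, hA, h₁, h₂⟩ := hdir A₁ hA₁ A₂ hA₂
  exact hs A hA (h₁ hx) y (h₂ hy)

theorem exists_maximal_isCommuting_le (M : Submodule R L) :
    ∃ A ≤ M, A.IsCommuting ∧ M ⊓ A.lieCentralizer ≤ A := by
  obtain ⟨A, hA⟩ : ∃ A, Maximal (fun A => A ≤ M ∧ A.IsCommuting) A := by
    refine zorn_le₀ _ fun c hc hchain => ⟨sSup c, ⟨sSup_le fun A hA => (hc hA).1, ?_⟩,
      fun _ => le_sSup⟩
    exact isCommuting_sSup_of_directedOn (fun A hA => (hc hA).2) hchain.directedOn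
  refine ⟨A, hA.1.1, hA.1.2, fun x hx => ?_⟩
  have hxA : A ≤ (span R {x}).lieCentralizer :=
    le_lieCentralizer_comm.mpr ((span_singleton_le_iff_mem x _).mpr hx.2)
  have hsup : A ⊔ span R {x} ≤ A :=
    hA.2 ⟨sup_le hA.1.1 ((span_singleton_le_iff_mem x M).mpr hx.1),
      hA.1.2.sup (isCommuting_span_singleton x) hxA⟩ le_sup_left
  exact hsup (mem_sup_right (mem_span_singleton_self x))

def IsCommuting.toLieSubalgebra {A : Submodule R L} (hA : A.IsCommuting) :
    LieSubalgebra R L :=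
  { A with lie_mem' := fun hx hy => by rw [hA hx _ hy]; exact A.zero_mem }

theorem exists_isCommuting_mem_invtSubmodule_lieCentralizer_le [Invertible (2 : R)]
    {τ : L →ₗ⁅R⁆ L} (hτ : ∀ x, τ (τ x) = x) :
    ∃ T : Submodule R L, T.IsCommuting ∧ T ∈ invtSubmodule (τ : End R L) ∧
      T.lieCentralizer ≤ T := by
  set f : End R L := τ.toLinearMap
  obtain ⟨A, hAfix, hA, hAmax⟩ := exists_maximal_isCommuting_le (f.eigenspace 1)
  obtain ⟨B, hBle, hB, hBmax⟩ :=
    exists_maximal_isCommuting_le (f.eigenspace (-1) ⊓ A.lieCentralizer)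
  have hAB : A ≤ B.lieCentralizer := le_lieCentralizer_comm.mpr (hBle.trans inf_le_right)
  have hinv : A ⊔ B ∈ f.invtSubmodule :=
    Sublattice.supClosed _ (mem_invtSubmodule_of_le_eigenspace hAfix)
      (mem_invtSubmodule_of_le_eigenspace (hBle.trans inf_le_left))
  refine ⟨A ⊔ B, hA.sup hB hAB, hinv, ?_⟩
  have hC := (lieCentralizer_sup A B).le
  calc (A ⊔ B).lieCentralizer
      ≤ (A ⊔ B).lieCentralizer ⊓ f.eigenspace 1 ⊔ (A ⊔ B).lieCentralizer ⊓ f.eigenspace (-1) :=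
        le_inf_eigenspace_one_sup_inf_eigenspace_neg_one hτ
          (lieCentralizer_mem_invtSubmodule hτ hinv)
    _ ≤ A ⊔ B := sup_le_sup (fun _ hx => hAmax ⟨hx.2, (hC hx.1).1⟩)
        (fun _ hx => hBmax ⟨⟨hx.2, (hC hx.1).1⟩, (hC hx.1).2⟩)

end Submodule

open Submodule in
theorem exists_tau_stable_maximal_abelian_general
    {𝔨 : Type*} [LieRing 𝔨] [LieAlgebra ℝ 𝔨]
    (τ : 𝔨 →ₗ⁅ℝ⁆ 𝔨) (hτ2 : ∀ x, τ (τ x) = x) :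
    ∃ 𝔱 : LieSubalgebra ℝ 𝔨,
      (∀ x ∈ 𝔱, ∀ y ∈ 𝔱, ⁅x, y⁆ = 0) ∧
      (∀ 𝔥 : LieSubalgebra ℝ 𝔨, (∀ x ∈ 𝔥, ∀ y ∈ 𝔥, ⁅x, y⁆ = 0) → 𝔱 ≤ 𝔥 → 𝔥 = 𝔱) ∧
      (∀ x ∈ 𝔱, τ x ∈ 𝔱) := by
  obtain ⟨T, hT, hτT, hTself⟩ := exists_isCommuting_mem_invtSubmodule_lieCentralizer_le hτ2
  refine ⟨hT.toLieSubalgebra, fun x hx y hy => hT hx y hy, fun 𝔥 h𝔥 hT𝔥 => ?_,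
    fun x hx => hτT hx⟩
  exact le_antisymm (fun x hx => hTself fun t ht => h𝔥 x hx t (hT𝔥 ht)) hT𝔥

/-- Let `𝔨` be the Lie algebra of a compact Lie group, i.e. a finite-dimensional real Lie
algebra admitting an invariant inner product `B`, and let `τ` be an involutive Lie algebra
automorphism of `𝔨`. Then there is a maximal abelian subalgebra `𝔱 ⊆ 𝔨` that is
`τ`-stable. -/
theorem exists_tau_stable_maximal_abelian
    {𝔨 : Type*} [LieRing 𝔨] [LieAlgebra ℝ 𝔨] [Module.Finite ℝ 𝔨]
    (B : 𝔨 →ₗ[ℝ] 𝔨 →ₗ[ℝ] ℝ)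
    (hBsymm : ∀ x y, B x y = B y x)
    (hBpos : ∀ x, x ≠ 0 → 0 < B x x)
    (hBinv : ∀ x y z : 𝔨, B ⁅x, y⁆ z + B y ⁅x, z⁆ = 0)
    (τ : 𝔨 →ₗ⁅ℝ⁆ 𝔨) (hτ2 : ∀ x, τ (τ x) = x) :
    ∃ 𝔱 : LieSubalgebra ℝ 𝔨,
      (∀ x ∈ 𝔱, ∀ y ∈ 𝔱, ⁅x, y⁆ = 0) ∧
      (∀ 𝔥 : LieSubalgebra ℝ 𝔨, (∀ x ∈ 𝔥, ∀ y ∈ 𝔥, ⁅x, y⁆ = 0) → 𝔱 ≤ 𝔥 → 𝔥 = 𝔱) ∧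
      (∀ x ∈ 𝔱, τ x ∈ 𝔱) :=
  exists_tau_stable_maximal_abelian_general τ hτ2
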